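/- arXiv:0910.1623 — 2 statements merged into one kernel-verified Lean document; each statement's English description precedes it below -/
import Mathlib

section
/- Under the same setup (y = Ax + w, x supported on N ⊆ N_e = T∪Δ, A_{N_e} full column rank, sufficient condition ‖A'(y − A_{N_e}c_{N_e})‖_∞ < γ[1 − max_{ω∉N_e}‖(A_Δ'MA_Δ)^{-1}A_Δ'MA_ω‖₁] holds), the global minimizer b̃ of L satisfies the ℓ² bound ‖b̃ − x‖₂ ≤ ‖(A_{N_e}'A_{N_e})^{-1}A_{N_e}'‖₂‖w‖₂ + γ√|Δ|·√(‖(A_T'A_T)^{-1}A_T'A_Δ(A_Δ'MA_Δ)^{-1}‖₂² + ‖(A_Δ'MA_Δ)^{-1}‖₂²). -/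
open Matrix Finset

noncomputable section

variable {n m : ℕ}

/-- Submatrix of columns of `A` indexed by `S`. -/
def cols (A : Matrix (Fin n) (Fin m) ℝ) (S : Finset (Fin m)) :
    Matrix (Fin n) {j // j ∈ S} ℝ := Matrix.of fun i j => A i j.1

/-- Subvector of `b` on indices in `S`. -/
def subv (b : Fin m → ℝ) (S : Finset (Fin m)) : {j // j ∈ S} → ℝ := fun j => b j.1

/-- `b` is supported on `S`. -/
def suppOn (b : Fin m → ℝ) (S : Finset (Fin m)) : Prop := ∀ j, j ∉ S → b j = 0

def l2v {k : Type*} [Fintype k] (v : k → ℝ) : ℝ := Real.sqrt (∑ i, v i ^ 2)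

def l1v {k : Type*} [Fintype k] (v : k → ℝ) : ℝ := ∑ i, |v i|

def linfv {k : Type*} [Fintype k] (v : k → ℝ) : ℝ := ⨆ i, |v i|

/-- ℓ¹ norm of the subvector of `b` on the complement of `T`. -/
def l1c (b : Fin m → ℝ) (T : Finset (Fin m)) : ℝ := ∑ j ∈ Tᶜ, |b j|

/-- Induced ℓ∞→ℓ∞ operator norm (max absolute row sum). -/
def matInf {k l : Type*} [Fintype k] [Fintype l] (B : Matrix k l ℝ) : ℝ :=
  ⨆ i, ∑ j, |B i j|

/-- Spectral norm (ℓ²→ℓ² operator norm). -/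
def spec {k l : Type*} [Fintype k] [Fintype l] (B : Matrix k l ℝ) : ℝ :=
  sSup ((fun x => l2v (B.mulVec x)) '' {x | l2v x ≤ 1})

/-- The modified-BPDN objective L(b) = (1/2)‖y − Ab‖₂² + γ‖b_{Tᶜ}‖₁. -/
def objL (A : Matrix (Fin n) (Fin m) ℝ) (y : Fin n → ℝ) (γ : ℝ) (T : Finset (Fin m))
    (b : Fin m → ℝ) : ℝ :=
  (1/2) * (∑ i, (y i - A.mulVec b i) ^ 2) + γ * l1c b T

/-- Orthogonal projector M = I − A_T (A_Tᵀ A_T)⁻¹ A_Tᵀ. -/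
def projM (A : Matrix (Fin n) (Fin m) ℝ) (T : Finset (Fin m)) : Matrix (Fin n) (Fin n) ℝ :=
  1 - cols A T * ((cols A T)ᵀ * cols A T)⁻¹ * (cols A T)ᵀ

/-- Least squares coefficients on `S` : (A_Sᵀ A_S)⁻¹ A_Sᵀ y. -/
def lsq (A : Matrix (Fin n) (Fin m) ℝ) (S : Finset (Fin m)) (y : Fin n → ℝ) :
    {j // j ∈ S} → ℝ :=
  ((cols A S)ᵀ * cols A S)⁻¹.mulVec ((cols A S)ᵀ.mulVec y)

/-- Least squares estimate on `S`, as a vector in ℝᵐ supported on `S`. -/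
def lsqFull (A : Matrix (Fin n) (Fin m) ℝ) (S : Finset (Fin m)) (y : Fin n → ℝ) :
    Fin m → ℝ := fun j => if h : j ∈ S then lsq A S y ⟨j, h⟩ else 0

/-- The matrix A_Δᵀ M A_Δ. -/
def schur (A : Matrix (Fin n) (Fin m) ℝ) (T Δ : Finset (Fin m)) :
    Matrix {j // j ∈ Δ} {j // j ∈ Δ} ℝ :=
  (cols A Δ)ᵀ * projM A T * cols A Δ

/-- The matrix (A_Tᵀ A_T)⁻¹ A_Tᵀ A_Δ (A_Δᵀ M A_Δ)⁻¹. -/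
def crossMat (A : Matrix (Fin n) (Fin m) ℝ) (T Δ : Finset (Fin m)) :
    Matrix {j // j ∈ T} {j // j ∈ Δ} ℝ :=
  ((cols A T)ᵀ * cols A T)⁻¹ * ((cols A T)ᵀ * cols A Δ) * (schur A T Δ)⁻¹

/-- The exact-recovery-coefficient quantity ‖(A_Δᵀ M A_Δ)⁻¹ A_Δᵀ M A_ω‖₁. -/
def erc (A : Matrix (Fin n) (Fin m) ℝ) (T Δ : Finset (Fin m)) (ω : Fin m) : ℝ :=
  l1v ((schur A T Δ)⁻¹.mulVec (((cols A Δ)ᵀ * projM A T).mulVec (fun i => A i ω)))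

/-- `δ` is a valid S-restricted isometry constant for `A`. -/
def RIP (A : Matrix (Fin n) (Fin m) ℝ) (S : ℕ) (δ : ℝ) : Prop :=
  0 ≤ δ ∧ ∀ (J : Finset (Fin m)), J.card ≤ S → ∀ x : Fin m → ℝ, suppOn x J →
    (1 - δ) * (∑ i, x i ^ 2) ≤ (∑ i, (A.mulVec x i) ^ 2) ∧
    (∑ i, (A.mulVec x i) ^ 2) ≤ (1 + δ) * (∑ i, x i ^ 2)

/-- `θ` is a valid (S,S')-restricted orthogonality constant for `A`. -/
def ROC (A : Matrix (Fin n) (Fin m) ℝ) (S S' : ℕ) (θ : ℝ) : Prop :=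
  0 ≤ θ ∧ ∀ (J J' : Finset (Fin m)), Disjoint J J' → J.card ≤ S → J'.card ≤ S' →
    ∀ x x' : Fin m → ℝ, suppOn x J → suppOn x' J' →
      |dotProduct (A.mulVec x) (A.mulVec x')| ≤ θ * l2v x * l2v x'

/-- `b` minimizes the modified-BPDN objective over vectors supported on `S`. -/
def IsRestrMin (A : Matrix (Fin n) (Fin m) ℝ) (y : Fin n → ℝ) (γ : ℝ)
    (T S : Finset (Fin m)) (b : Fin m → ℝ) : Prop :=
  suppOn b S ∧ ∀ b', suppOn b' S → objL A y γ T b ≤ objL A y γ T b'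

/-- `g` is a subgradient of `b ↦ ‖b_{Tᶜ}‖₁` at `b`. -/
def IsSubgrad (T : Finset (Fin m)) (b g : Fin m → ℝ) : Prop :=
  (∀ j, j ∈ T → g j = 0) ∧
  ∀ j, j ∉ T → |g j| ≤ 1 ∧ (b j ≠ 0 → g j = Real.sign (b j))

/-!
Write `N_e = T ∪ Δ` and let `c` be the least-squares fit of `y` on the columns `N_e`. Since
`A_{N_e}` has full column rank, `L` is coercive on vectors supported on `N_e` and has a
minimizer `b*` there. Its optimality conditions say that `d = b* − c` satisfies `A_T'A d = 0`
and `A_Δ'A d = r` with `|r_j| ≤ γ`; eliminating `d_T` through the Schur complement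
`A_Δ'MA_Δ` gives `d_Δ = (A_Δ'MA_Δ)⁻¹ r`, `d_T = −(A_T'A_T)⁻¹A_T'A_Δ(A_Δ'MA_Δ)⁻¹ r` and
`A d = MA_Δ(A_Δ'MA_Δ)⁻¹ r`. Hence for `ω ∉ N_e` the correlation `A_ω'(Ab* − y)` is at most
`γ·erc(ω) + ‖A'(y − A_{N_e}c)‖_∞ < γ` in absolute value, and convexity of `L` turns this
strict dual feasibility into: every global minimizer `b̃` is supported on `N_e`. So `b̃` is a
restricted minimizer as well, the same block formulas bound `‖b̃ − c‖₂` by the `γ`-term, and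
`c − x = (A_{N_e}'A_{N_e})⁻¹A_{N_e}'w` gives the noise term.
-/

section Norms

variable {k l : Type*} [Fintype k] [Fintype l]

lemma l2v_eq_norm (v : k → ℝ) : l2v v = ‖WithLp.toLp 2 v‖ := by
  simp [l2v, EuclideanSpace.norm_eq, sq_abs]

lemma l2v_nonneg (v : k → ℝ) : 0 ≤ l2v v := Real.sqrt_nonneg _

lemma l2v_add_le (a b : k → ℝ) : l2v (a + b) ≤ l2v a + l2v b := by
  simpa only [l2v_eq_norm, WithLp.toLp_add] using norm_add_le (WithLp.toLp 2 a) (WithLp.toLp 2 b)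

lemma l2v_neg (a : k → ℝ) : l2v (-a) = l2v a := by
  simp [l2v]

lemma l2v_le_of_abs_le {γ : ℝ} {r : k → ℝ} (hr : ∀ j, |r j| ≤ γ) :
    l2v r ≤ γ * Real.sqrt (Fintype.card k) := by
  rcases isEmpty_or_nonempty k with hk | ⟨⟨j⟩⟩
  · simp [l2v]
  have hγ : 0 ≤ γ := (abs_nonneg _).trans (hr j)
  rw [l2v, ← Real.sqrt_sq hγ, ← Real.sqrt_mul (sq_nonneg γ)]
  refine Real.sqrt_le_sqrt ?_
  calc ∑ i, r i ^ 2 ≤ ∑ _i : k, γ ^ 2 :=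
        Finset.sum_le_sum fun i _ => sq_le_sq' (abs_le.mp (hr i)).1 (abs_le.mp (hr i)).2
    _ = γ ^ 2 * Fintype.card k := by simp [mul_comm]

lemma abs_dotProduct_le_l1v_mul {γ : ℝ} (u r : k → ℝ) (hr : ∀ j, |r j| ≤ γ) :
    |u ⬝ᵥ r| ≤ l1v u * γ := by
  rw [dotProduct, l1v, Finset.sum_mul]
  refine (Finset.abs_sum_le_sum_abs _ _).trans (Finset.sum_le_sum fun j _ => ?_)
  rw [abs_mul]
  exact mul_le_mul_of_nonneg_left (hr j) (abs_nonneg _)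

lemma abs_le_linfv (v : k → ℝ) (i : k) : |v i| ≤ linfv v :=
  le_ciSup (f := fun i => |v i|) (Set.finite_range _).bddAbove i

open scoped Matrix.Norms.L2Operator in
lemma spec_eq_l2_opNorm [DecidableEq l] (B : Matrix k l ℝ) : spec B = ‖B‖ := by
  rw [Matrix.l2_opNorm_def, ← ContinuousLinearMap.sSup_unitClosedBall_eq_norm, spec]
  congr 1
  ext r
  simp only [Set.mem_image, Set.mem_ofPred_eq, Metric.mem_closedBall, dist_zero_right,
    l2v_eq_norm, LinearEquiv.trans_apply, LinearMap.coe_toContinuousLinearMap',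
    Matrix.toLpLin_apply]
  exact ⟨fun ⟨x, hx⟩ => ⟨WithLp.toLp 2 x, hx⟩, fun ⟨x, hx⟩ => ⟨x.ofLp, hx⟩⟩

open scoped Matrix.Norms.L2Operator in
lemma spec_nonneg (B : Matrix k l ℝ) : 0 ≤ spec B := by
  classical
  rw [spec_eq_l2_opNorm]
  exact norm_nonneg _

open scoped Matrix.Norms.L2Operator in
lemma l2v_mulVec_le (B : Matrix k l ℝ) (v : l → ℝ) : l2v (B *ᵥ v) ≤ spec B * l2v v := by
  classical
  rw [spec_eq_l2_opNorm, l2v_eq_norm, l2v_eq_norm]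
  exact B.l2_opNorm_mulVec (WithLp.toLp 2 v)

end Norms

section Support

variable {S : Finset (Fin m)}

def extv (z : {j // j ∈ S} → ℝ) : Fin m → ℝ := fun j => if h : j ∈ S then z ⟨j, h⟩ else 0

lemma suppOn_extv (z : {j // j ∈ S} → ℝ) : suppOn (extv z) S := fun _ h => dif_neg h

lemma subv_extv (z : {j // j ∈ S} → ℝ) : subv (extv z) S = z := by
  funext j
  exact dif_pos j.2

lemma extv_subv {b : Fin m → ℝ} (hb : suppOn b S) : extv (subv b S) = b := by
  funext j
  by_cases h : j ∈ S
  · exact dif_pos h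
  · rw [hb j h]
    exact dif_neg h

lemma suppOn_sub {b b' : Fin m → ℝ} (hb : suppOn b S) (hb' : suppOn b' S) :
    suppOn (b - b') S := fun j hj => by simp [hb j hj, hb' j hj]

lemma suppOn_mono {b : Fin m → ℝ} {S' : Finset (Fin m)} (hb : suppOn b S) (h : S ⊆ S') :
    suppOn b S' := fun j hj => hb j fun hS => hj (h hS)

lemma sum_subv {f : ℝ → ℝ} (b : Fin m → ℝ) : ∑ j, f (subv b S j) = ∑ j ∈ S, f (b j) :=
  Finset.sum_coe_sort S fun j => f (b j)

lemma sum_eq_sum_of_suppOn {f : ℝ → ℝ} (hf : f 0 = 0) {b : Fin m → ℝ} (hb : suppOn b S) :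
    ∑ j, f (b j) = ∑ j ∈ S, f (b j) :=
  (Finset.sum_subset (Finset.subset_univ S) fun j _ hj => by rw [hb j hj, hf]).symm

lemma l2v_eq_l2v_subv {b : Fin m → ℝ} (hb : suppOn b S) : l2v b = l2v (subv b S) := by
  rw [l2v, l2v, sum_subv (f := (· ^ 2)), sum_eq_sum_of_suppOn (f := (· ^ 2)) (by simp) hb]

lemma l2v_sq_eq_add_of_suppOn_union {T Δ : Finset (Fin m)} (hdisj : Disjoint T Δ) {b : Fin m → ℝ}
    (hb : suppOn b (T ∪ Δ)) : l2v b ^ 2 = l2v (subv b T) ^ 2 + l2v (subv b Δ) ^ 2 := by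
  simp only [l2v, Real.sq_sqrt (Finset.sum_nonneg fun _ _ => sq_nonneg _)]
  rw [sum_subv (f := (· ^ 2)), sum_subv (f := (· ^ 2)),
    sum_eq_sum_of_suppOn (f := (· ^ 2)) (by simp) hb, Finset.sum_union hdisj]

variable (A : Matrix (Fin n) (Fin m) ℝ)

lemma subv_transpose_mulVec (r : Fin n → ℝ) : subv (Aᵀ *ᵥ r) S = (cols A S)ᵀ *ᵥ r := rfl

lemma cols_mulVec_subv_apply (b : Fin m → ℝ) (i : Fin n) :
    (cols A S *ᵥ subv b S) i = ∑ j ∈ S, A i j * b j :=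
  Finset.sum_coe_sort S fun j => A i j * b j

lemma mulVec_eq_cols_mulVec_subv {b : Fin m → ℝ} (hb : suppOn b S) :
    A *ᵥ b = cols A S *ᵥ subv b S := by
  funext i
  rw [cols_mulVec_subv_apply]
  exact (Finset.sum_subset (Finset.subset_univ S) fun j _ hj => by rw [hb j hj, mul_zero]).symm

lemma mulVec_eq_add_of_suppOn_union {T Δ : Finset (Fin m)} (hdisj : Disjoint T Δ)
    {b : Fin m → ℝ} (hb : suppOn b (T ∪ Δ)) :
    A *ᵥ b = cols A T *ᵥ subv b T + cols A Δ *ᵥ subv b Δ := by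
  funext i
  rw [mulVec_eq_cols_mulVec_subv A hb, Pi.add_apply, cols_mulVec_subv_apply,
    cols_mulVec_subv_apply, cols_mulVec_subv_apply, Finset.sum_union hdisj]

lemma isUnit_of_mulVec_eq_zero {K k : Type*} [Field K] [Fintype k] [DecidableEq k]
    {G : Matrix k k K} (h : ∀ v, G *ᵥ v = 0 → v = 0) : IsUnit G :=
  mulVec_injective_iff_isUnit.mp fun v w hvw =>
    sub_eq_zero.mp (h _ (by rw [mulVec_sub, hvw, sub_self]))

lemma transpose_mul_self_mulVec_eq_zero {ι k : Type*} [Fintype ι] [Fintype k]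
    (B : Matrix ι k ℝ) (v : k → ℝ) : (Bᵀ * B) *ᵥ v = 0 ↔ B *ᵥ v = 0 := by
  simpa only [conjTranspose_eq_transpose_of_trivial] using
    conjTranspose_mul_self_mulVec_eq_zero B v

lemma eq_zero_of_suppOn_of_mulVec_eq_zero (hrank : IsUnit ((cols A S)ᵀ * cols A S))
    {b : Fin m → ℝ} (hb : suppOn b S) (hAb : A *ᵥ b = 0) : b = 0 := by
  have hG : ((cols A S)ᵀ * cols A S) *ᵥ subv b S = 0 := by
    rw [transpose_mul_self_mulVec_eq_zero, ← mulVec_eq_cols_mulVec_subv A hb, hAb]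
  have hsub : subv b S = 0 :=
    (mulVec_injective_iff_isUnit.mpr hrank).eq_iff' (mulVec_zero _) |>.mp hG
  funext j
  by_cases h : j ∈ S
  · exact congrFun hsub ⟨j, h⟩
  · exact hb j h

lemma isUnit_gram_of_subset {S' : Finset (Fin m)} (hS : S ⊆ S')
    (hrank : IsUnit ((cols A S')ᵀ * cols A S')) : IsUnit ((cols A S)ᵀ * cols A S) := by
  refine isUnit_of_mulVec_eq_zero fun z hz => ?_
  rw [transpose_mul_self_mulVec_eq_zero, ← subv_extv z,
    ← mulVec_eq_cols_mulVec_subv A (suppOn_extv z)] at hz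
  rw [← subv_extv z, eq_zero_of_suppOn_of_mulVec_eq_zero A hrank
    (suppOn_mono (suppOn_extv z) hS) hz]
  rfl

end Support

section Projector

variable {A : Matrix (Fin n) (Fin m) ℝ} {T Δ : Finset (Fin m)}

lemma transpose_gram (S : Finset (Fin m)) : ((cols A S)ᵀ * cols A S)ᵀ = (cols A S)ᵀ * cols A S := by
  rw [transpose_mul, transpose_transpose]

lemma projM_transpose : (projM A T)ᵀ = projM A T := by
  rw [projM, transpose_sub, transpose_one, transpose_mul, transpose_mul, transpose_transpose,
    transpose_nonsing_inv, transpose_gram, Matrix.mul_assoc]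

lemma projM_mul_cols (hGT : IsUnit ((cols A T)ᵀ * cols A T)) : projM A T * cols A T = 0 := by
  rw [projM, Matrix.sub_mul, Matrix.one_mul, Matrix.mul_assoc, Matrix.mul_assoc,
    nonsing_inv_mul _ ((isUnit_iff_isUnit_det _).mp hGT), Matrix.mul_one, sub_self]

lemma projM_mul_self (hGT : IsUnit ((cols A T)ᵀ * cols A T)) :
    projM A T * projM A T = projM A T := by
  conv_lhs => enter [2]; rw [projM]
  rw [Matrix.mul_sub, Matrix.mul_one, ← Matrix.mul_assoc, ← Matrix.mul_assoc,
    projM_mul_cols hGT, Matrix.zero_mul, Matrix.zero_mul, sub_zero]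

lemma schur_transpose : (schur A T Δ)ᵀ = schur A T Δ := by
  rw [schur, transpose_mul, transpose_mul, transpose_transpose, projM_transpose, Matrix.mul_assoc]

lemma schur_eq_transpose_mul_self (hGT : IsUnit ((cols A T)ᵀ * cols A T)) :
    schur A T Δ = (projM A T * cols A Δ)ᵀ * (projM A T * cols A Δ) := by
  rw [transpose_mul, projM_transpose, Matrix.mul_assoc, ← Matrix.mul_assoc (projM A T),
    projM_mul_self hGT, schur, Matrix.mul_assoc]

lemma projM_mul_cols_mulVec (z : {j // j ∈ Δ} → ℝ) :
    (projM A T * cols A Δ) *ᵥ z = cols A Δ *ᵥ z -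
      cols A T *ᵥ ((((cols A T)ᵀ * cols A T)⁻¹ * ((cols A T)ᵀ * cols A Δ)) *ᵥ z) := by
  simp only [projM, Matrix.sub_mul, Matrix.one_mul, sub_mulVec, mulVec_mulVec, Matrix.mul_assoc]

lemma isUnit_schur (hdisj : Disjoint T Δ) (hrank : IsUnit ((cols A (T ∪ Δ))ᵀ * cols A (T ∪ Δ))) :
    IsUnit (schur A T Δ) := by
  have hGT := isUnit_gram_of_subset A Finset.subset_union_left hrank
  refine isUnit_of_mulVec_eq_zero fun z hz => ?_
  rw [schur_eq_transpose_mul_self hGT, transpose_mul_self_mulVec_eq_zero,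
    projM_mul_cols_mulVec] at hz
  set u := (((cols A T)ᵀ * cols A T)⁻¹ * ((cols A T)ᵀ * cols A Δ)) *ᵥ z
  have hb : extv z - extv u = 0 := by
    refine eq_zero_of_suppOn_of_mulVec_eq_zero A hrank
      (suppOn_sub (suppOn_mono (suppOn_extv z) Finset.subset_union_right)
        (suppOn_mono (suppOn_extv u) Finset.subset_union_left)) ?_
    rw [mulVec_sub, mulVec_eq_cols_mulVec_subv A (suppOn_extv z),
      mulVec_eq_cols_mulVec_subv A (suppOn_extv u), subv_extv, subv_extv, hz]
  funext j
  have := congrFun hb j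
  rwa [Pi.sub_apply, suppOn_extv u j (Finset.disjoint_right.mp hdisj j.2), sub_zero,
    extv, dif_pos j.2] at this

end Projector

section BlockSolve

variable (A : Matrix (Fin n) (Fin m) ℝ) {T Δ : Finset (Fin m)} {d : Fin m → ℝ}

lemma subv_left_eq_of_transpose_mulVec_eq_zero (hdisj : Disjoint T Δ)
    (hGT : IsUnit ((cols A T)ᵀ * cols A T)) (hd : suppOn d (T ∪ Δ))
    (hT : (cols A T)ᵀ *ᵥ (A *ᵥ d) = 0) :
    subv d T = -((((cols A T)ᵀ * cols A T)⁻¹ * ((cols A T)ᵀ * cols A Δ)) *ᵥ subv d Δ) := by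
  rw [mulVec_eq_add_of_suppOn_union A hdisj hd, mulVec_add, mulVec_mulVec, mulVec_mulVec,
    add_eq_zero_iff_eq_neg] at hT
  rw [← mulVec_mulVec, ← mulVec_neg, ← hT, mulVec_mulVec,
    nonsing_inv_mul _ ((isUnit_iff_isUnit_det _).mp hGT), one_mulVec]

lemma mulVec_eq_projM_mul_cols_mulVec (hdisj : Disjoint T Δ)
    (hGT : IsUnit ((cols A T)ᵀ * cols A T)) (hd : suppOn d (T ∪ Δ))
    (hT : (cols A T)ᵀ *ᵥ (A *ᵥ d) = 0) :
    A *ᵥ d = (projM A T * cols A Δ) *ᵥ subv d Δ := by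
  rw [projM_mul_cols_mulVec, mulVec_eq_add_of_suppOn_union A hdisj hd,
    subv_left_eq_of_transpose_mulVec_eq_zero A hdisj hGT hd hT, mulVec_neg, sub_eq_add_neg,
    add_comm]

lemma subv_right_eq_schur_inv_mulVec (hdisj : Disjoint T Δ)
    (hrank : IsUnit ((cols A (T ∪ Δ))ᵀ * cols A (T ∪ Δ)))
    (hd : suppOn d (T ∪ Δ)) (hT : (cols A T)ᵀ *ᵥ (A *ᵥ d) = 0) :
    subv d Δ = (schur A T Δ)⁻¹ *ᵥ ((cols A Δ)ᵀ *ᵥ (A *ᵥ d)) := by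
  have hGT := isUnit_gram_of_subset A Finset.subset_union_left hrank
  have hschur : schur A T Δ *ᵥ subv d Δ = (cols A Δ)ᵀ *ᵥ (A *ᵥ d) := by
    rw [mulVec_eq_projM_mul_cols_mulVec A hdisj hGT hd hT, mulVec_mulVec, schur, Matrix.mul_assoc]
  rw [← hschur, mulVec_mulVec,
    nonsing_inv_mul _ ((isUnit_iff_isUnit_det _).mp (isUnit_schur hdisj hrank)), one_mulVec]

lemma subv_left_eq_neg_crossMat_mulVec (hdisj : Disjoint T Δ)
    (hrank : IsUnit ((cols A (T ∪ Δ))ᵀ * cols A (T ∪ Δ)))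
    (hd : suppOn d (T ∪ Δ)) (hT : (cols A T)ᵀ *ᵥ (A *ᵥ d) = 0) :
    subv d T = -(crossMat A T Δ *ᵥ ((cols A Δ)ᵀ *ᵥ (A *ᵥ d))) := by
  rw [subv_left_eq_of_transpose_mulVec_eq_zero A hdisj
      (isUnit_gram_of_subset A Finset.subset_union_left hrank) hd hT,
    subv_right_eq_schur_inv_mulVec A hdisj hrank hd hT, mulVec_mulVec, crossMat]

lemma transpose_mulVec_mulVec_apply_eq_dotProduct (hdisj : Disjoint T Δ)
    (hrank : IsUnit ((cols A (T ∪ Δ))ᵀ * cols A (T ∪ Δ))) (hd : suppOn d (T ∪ Δ))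
    (hT : (cols A T)ᵀ *ᵥ (A *ᵥ d) = 0) (ω : Fin m) :
    (Aᵀ *ᵥ (A *ᵥ d)) ω =
      ((schur A T Δ)⁻¹ *ᵥ (((cols A Δ)ᵀ * projM A T) *ᵥ fun i => A i ω)) ⬝ᵥ
        ((cols A Δ)ᵀ *ᵥ (A *ᵥ d)) := by
  have hGT := isUnit_gram_of_subset A Finset.subset_union_left hrank
  change (fun i => A i ω) ⬝ᵥ (A *ᵥ d) = _
  conv_lhs => rw [mulVec_eq_projM_mul_cols_mulVec A hdisj hGT hd hT,
    subv_right_eq_schur_inv_mulVec A hdisj hrank hd hT]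
  have hmat : (schur A T Δ)⁻¹ * ((cols A Δ)ᵀ * projM A T) =
      (projM A T * cols A Δ * (schur A T Δ)⁻¹)ᵀ := by
    rw [transpose_mul, transpose_mul, transpose_nonsing_inv, schur_transpose, projM_transpose]
  rw [mulVec_mulVec, dotProduct_mulVec, ← mulVec_transpose, ← hmat, ← mulVec_mulVec]

end BlockSolve

lemma nonneg_of_forall_nonneg_mul_add_sq {q a : ℝ}
    (h : ∀ s, 0 < s → s ≤ 1 → 0 ≤ q * s + a * s ^ 2) : 0 ≤ q := by
  by_contra! hq
  have hden : 0 < |a| - q := by linarith [abs_nonneg a]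
  set s := -q / (|a| - q)
  have hs : 0 < s := div_pos (neg_pos.mpr hq) hden
  have hval : (q + |a| * s) * (|a| - q) = -q ^ 2 := by
    simp only [s]; field_simp; ring
  have hneg : q + |a| * s < 0 := by
    by_contra! hc
    nlinarith [mul_nonneg hc hden.le, sq_pos_of_neg hq]
  have h1 := h s hs ((div_le_one hden).mpr (by linarith [abs_nonneg a]))
  nlinarith [le_abs_self a, mul_pos hs hs]

section Objective

variable (A : Matrix (Fin n) (Fin m) ℝ) (y : Fin n → ℝ) (γ : ℝ) (T : Finset (Fin m))

def objIncr (b : Fin m → ℝ) (j : Fin m) (t : ℝ) : ℝ :=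
  (Aᵀ *ᵥ (A *ᵥ b - y)) j * t + if j ∈ T then 0 else γ * (|b j + t| - |b j|)

lemma objIncr_zero (b : Fin m → ℝ) (j : Fin m) : objIncr A y γ T b j 0 = 0 := by
  simp [objIncr]

lemma objL_add (b h : Fin m → ℝ) :
    objL A y γ T (b + h) =
      objL A y γ T b + (1 / 2) * ∑ i, (A *ᵥ h) i ^ 2 + ∑ j, objIncr A y γ T b j (h j) := by
  have hlin : ∑ j, (Aᵀ *ᵥ (A *ᵥ b - y)) j * h j = ∑ i, (A *ᵥ b - y) i * (A *ᵥ h) i := by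
    rw [← dotProduct, ← dotProduct, dotProduct_comm, dotProduct_mulVec, vecMul_transpose,
      dotProduct_comm]
  have hpen : ∑ j, (if j ∈ T then 0 else γ * (|b j + h j| - |b j|)) =
      γ * l1c (b + h) T - γ * l1c b T := by
    rw [← Finset.sum_add_sum_compl T, Finset.sum_eq_zero fun j hj => if_pos hj, zero_add, l1c,
      l1c, Finset.mul_sum, Finset.mul_sum, ← Finset.sum_sub_distrib]
    exact Finset.sum_congr rfl fun j hj => by
      rw [if_neg (Finset.mem_compl.mp hj), Pi.add_apply, mul_sub]
  simp only [objIncr, Finset.sum_add_distrib, hlin, hpen, objL, mulVec_add]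
  have hsq : ∀ i, (y i - ((A *ᵥ b) i + (A *ᵥ h) i)) ^ 2 =
      (y i - (A *ᵥ b) i) ^ 2 + 2 * ((A *ᵥ b - y) i * (A *ᵥ h) i) + (A *ᵥ h) i ^ 2 := by
    intro i; simp only [Pi.sub_apply]; ring
  simp only [Pi.add_apply, hsq, Finset.sum_add_distrib, ← Finset.mul_sum]
  ring

variable {γ} in
lemma objIncr_mul_le (hγ : 0 ≤ γ) (b : Fin m → ℝ) (j : Fin m) (t : ℝ) {s : ℝ} (hs0 : 0 ≤ s)
    (hs1 : s ≤ 1) : objIncr A y γ T b j (s * t) ≤ s * objIncr A y γ T b j t := by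
  unfold objIncr
  split_ifs
  · linarith
  · have hconv : |b j + s * t| ≤ (1 - s) * |b j| + s * |b j + t| := by
      calc |b j + s * t| = |(1 - s) * b j + s * (b j + t)| := by ring_nf
        _ ≤ |(1 - s) * b j| + |s * (b j + t)| := abs_add_le _ _
        _ = (1 - s) * |b j| + s * |b j + t| := by
          rw [abs_mul, abs_mul, abs_of_nonneg hs0, abs_of_nonneg (by linarith)]
    nlinarith [mul_le_mul_of_nonneg_left hconv hγ]

end Objective

section Optimality

variable {A : Matrix (Fin n) (Fin m) ℝ} {y : Fin n → ℝ} {γ : ℝ} {T S : Finset (Fin m)}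
  {b : Fin m → ℝ}

lemma IsRestrMin.objIncr_nonneg (hγ : 0 ≤ γ) (hb : IsRestrMin A y γ T S b) {j : Fin m}
    (hj : j ∈ S) (t : ℝ) : 0 ≤ objIncr A y γ T b j t := by
  -- Shrinking the step to `s t` costs `O(s²)` in the quadratic part and, by convexity, at most
  -- `s • objIncr t` in the rest.
  refine nonneg_of_forall_nonneg_mul_add_sq (a := (1 / 2) * ∑ i, (A i j * t) ^ 2)
    fun s hs0 hs1 => ?_
  have hsupp : suppOn (b + Pi.single j (s * t)) S := fun k hk => by
    rw [Pi.add_apply, hb.1 k hk, Pi.single_eq_of_ne (fun h : k = j => hk (h ▸ hj)), add_zero]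
  have hmin := hb.2 _ hsupp
  rw [objL_add, Finset.sum_eq_single j (fun k _ hk => by rw [Pi.single_eq_of_ne hk, objIncr_zero])
    (by simp), Pi.single_eq_same] at hmin
  have hquad : ∑ i, (A *ᵥ Pi.single j (s * t)) i ^ 2 = (∑ i, (A i j * t) ^ 2) * s ^ 2 := by
    rw [Finset.sum_mul]
    refine Finset.sum_congr rfl fun i _ => ?_
    rw [show (A *ᵥ Pi.single j (s * t)) i = A i j * (s * t) from dotProduct_single _ _ _]
    ring
  nlinarith [objIncr_mul_le A y T hγ b j t hs0.le hs1]

lemma IsRestrMin.corr_eq_zero (hγ : 0 ≤ γ) (hb : IsRestrMin A y γ T S b) {j : Fin m}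
    (hjS : j ∈ S) (hjT : j ∈ T) : (Aᵀ *ᵥ (A *ᵥ b - y)) j = 0 := by
  have := hb.objIncr_nonneg hγ hjS (-(Aᵀ *ᵥ (A *ᵥ b - y)) j)
  rw [objIncr, if_pos hjT] at this
  nlinarith

lemma IsRestrMin.abs_corr_le (hγ : 0 ≤ γ) (hb : IsRestrMin A y γ T S b) {j : Fin m}
    (hjS : j ∈ S) (hjT : j ∉ T) : |(Aᵀ *ᵥ (A *ᵥ b - y)) j| ≤ γ := by
  set v := (Aᵀ *ᵥ (A *ᵥ b - y)) j
  have := hb.objIncr_nonneg hγ hjS (-v)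
  rw [objIncr, if_neg hjT] at this
  have htri : |b j + -v| - |b j| ≤ |v| := by
    simpa using abs_sub_abs_le_abs_sub (b j + -v) (b j)
  nlinarith [mul_le_mul_of_nonneg_left htri hγ, sq_abs v, abs_nonneg v]

lemma IsRestrMin.objL_add_le (hγ : 0 ≤ γ) (hb : IsRestrMin A y γ T S b) (hTS : T ⊆ S)
    (b' : Fin m → ℝ) :
    objL A y γ T b + ∑ j ∈ Sᶜ, (γ - |(Aᵀ *ᵥ (A *ᵥ b - y)) j|) * |b' j| ≤ objL A y γ T b' := by
  have hexp := objL_add A y γ T b (b' - b)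
  rw [add_sub_cancel] at hexp
  rw [hexp, ← Finset.sum_add_sum_compl S]
  have hquad : 0 ≤ (1 / 2) * ∑ i, (A *ᵥ (b' - b)) i ^ 2 := by positivity
  have hin : 0 ≤ ∑ j ∈ S, objIncr A y γ T b j ((b' - b) j) :=
    Finset.sum_nonneg fun j hj => hb.objIncr_nonneg hγ hj _
  have hout : ∑ j ∈ Sᶜ, (γ - |(Aᵀ *ᵥ (A *ᵥ b - y)) j|) * |b' j| ≤
      ∑ j ∈ Sᶜ, objIncr A y γ T b j ((b' - b) j) := by
    refine Finset.sum_le_sum fun j hj => ?_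
    have hjS := Finset.mem_compl.mp hj
    rw [objIncr, if_neg fun hjT => hjS (hTS hjT), Pi.sub_apply, hb.1 j hjS, sub_zero, zero_add,
      abs_zero, sub_zero]
    nlinarith [neg_abs_le ((Aᵀ *ᵥ (A *ᵥ b - y)) j * b' j), abs_mul ((Aᵀ *ᵥ (A *ᵥ b - y)) j) (b' j)]
  linarith

lemma IsRestrMin.suppOn_of_forall_objL_le (hγ : 0 ≤ γ) (hb : IsRestrMin A y γ T S b)
    (hTS : T ⊆ S) (hstrict : ∀ j, j ∉ S → |(Aᵀ *ᵥ (A *ᵥ b - y)) j| < γ) {b' : Fin m → ℝ}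
    (hb' : ∀ b'', objL A y γ T b' ≤ objL A y γ T b'') : suppOn b' S := by
  have hterm : ∀ j ∈ Sᶜ, 0 ≤ (γ - |(Aᵀ *ᵥ (A *ᵥ b - y)) j|) * |b' j| := fun j hj =>
    mul_nonneg (sub_nonneg.mpr (hstrict j (Finset.mem_compl.mp hj)).le) (abs_nonneg _)
  have hsum : ∑ j ∈ Sᶜ, (γ - |(Aᵀ *ᵥ (A *ᵥ b - y)) j|) * |b' j| = 0 :=
    le_antisymm (by linarith [hb.objL_add_le hγ hTS b', hb' b]) (Finset.sum_nonneg hterm)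
  intro j hj
  rcases mul_eq_zero.mp ((Finset.sum_eq_zero_iff_of_nonneg hterm).mp hsum j
    (Finset.mem_compl.mpr hj)) with h | h
  · linarith [hstrict j hj]
  · exact abs_eq_zero.mp h

end Optimality

lemma half_l2v_sq_le_objL (A : Matrix (Fin n) (Fin m) ℝ) (y : Fin n → ℝ) {γ : ℝ} (hγ : 0 ≤ γ)
    (T : Finset (Fin m)) (b : Fin m → ℝ) : (1 / 2) * l2v (y - A *ᵥ b) ^ 2 ≤ objL A y γ T b := by
  rw [l2v, Real.sq_sqrt (Finset.sum_nonneg fun _ _ => sq_nonneg _), objL]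
  have : 0 ≤ γ * l1c b T := mul_nonneg hγ (Finset.sum_nonneg fun _ _ => abs_nonneg _)
  simp only [Pi.sub_apply]
  linarith

lemma exists_isRestrMin (A : Matrix (Fin n) (Fin m) ℝ) (y : Fin n → ℝ) {γ : ℝ} (hγ : 0 ≤ γ)
    (T S : Finset (Fin m)) (hrank : IsUnit ((cols A S)ᵀ * cols A S)) :
    ∃ b, IsRestrMin A y γ T S b := by
  set φ : EuclideanSpace ℝ {j // j ∈ S} → ℝ := fun z => objL A y γ T (extv z.ofLp)
  have hφ : Continuous φ := by
    have hobj : Continuous (objL A y γ T) := by unfold objL l1c; fun_prop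
    refine hobj.comp (continuous_pi fun j => ?_)
    unfold extv
    split <;> fun_prop
  have hbdd : Bornology.IsBounded {z | φ z ≤ φ 0} := by
    rw [Metric.isBounded_iff_subset_closedBall 0]
    refine ⟨spec (((cols A S)ᵀ * cols A S)⁻¹ * (cols A S)ᵀ) *
      (l2v y + Real.sqrt (2 * φ 0)), fun z hz => ?_⟩
    rw [Metric.mem_closedBall, dist_zero_right, ← WithLp.toLp_ofLp 2 z, ← l2v_eq_norm]
    set w := z.ofLp
    have hAw : A *ᵥ extv w = cols A S *ᵥ w := by
      rw [mulVec_eq_cols_mulVec_subv A (suppOn_extv w), subv_extv]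
    have hres : l2v (y - cols A S *ᵥ w) ≤ Real.sqrt (2 * φ 0) := by
      rw [← Real.sqrt_sq (l2v_nonneg _)]
      refine Real.sqrt_le_sqrt ?_
      have := half_l2v_sq_le_objL A y hγ T (extv w)
      rw [hAw] at this
      simp only [Set.mem_ofPred_eq, φ] at hz
      linarith
    have hw : (((cols A S)ᵀ * cols A S)⁻¹ * (cols A S)ᵀ) *ᵥ (cols A S *ᵥ w) = w := by
      rw [mulVec_mulVec, Matrix.mul_assoc,
        nonsing_inv_mul _ ((isUnit_iff_isUnit_det _).mp hrank), one_mulVec]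
    have hAwle : l2v (cols A S *ᵥ w) ≤ l2v y + Real.sqrt (2 * φ 0) := by
      have := l2v_add_le y (cols A S *ᵥ w - y)
      rw [add_sub_cancel, ← neg_sub, l2v_neg] at this
      linarith
    calc l2v w = l2v ((((cols A S)ᵀ * cols A S)⁻¹ * (cols A S)ᵀ) *ᵥ (cols A S *ᵥ w)) := by
          rw [hw]
      _ ≤ _ := l2v_mulVec_le _ _
      _ ≤ _ := mul_le_mul_of_nonneg_left hAwle (spec_nonneg _)
  obtain ⟨z, hz⟩ := hφ.exists_forall_le_of_isBounded 0 hbdd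
  refine ⟨extv z.ofLp, suppOn_extv _, fun b' hb' => ?_⟩
  simpa only [φ, extv_subv hb'] using hz (WithLp.toLp 2 (subv b' S))

section LeastSquares

variable (A : Matrix (Fin n) (Fin m) ℝ) {S : Finset (Fin m)} (y : Fin n → ℝ)

lemma suppOn_lsqFull : suppOn (lsqFull A S y) S := suppOn_extv _

lemma subv_lsqFull : subv (lsqFull A S y) S = lsq A S y := subv_extv _

variable {A y}

lemma cols_transpose_mulVec_sub_lsqFull (hrank : IsUnit ((cols A S)ᵀ * cols A S)) :
    (cols A S)ᵀ *ᵥ (A *ᵥ lsqFull A S y - y) = 0 := by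
  rw [mulVec_sub, mulVec_eq_cols_mulVec_subv A (suppOn_lsqFull A y), subv_lsqFull, lsq,
    mulVec_mulVec, mulVec_mulVec, mul_nonsing_inv _ ((isUnit_iff_isUnit_det _).mp hrank),
    one_mulVec, sub_self]

lemma transpose_mulVec_mulVec_sub_lsqFull_apply (hrank : IsUnit ((cols A S)ᵀ * cols A S))
    (b : Fin m → ℝ) {j : Fin m} (hj : j ∈ S) :
    (Aᵀ *ᵥ (A *ᵥ (b - lsqFull A S y))) j = (Aᵀ *ᵥ (A *ᵥ b - y)) j := by
  have h0 := congrFun (cols_transpose_mulVec_sub_lsqFull hrank (y := y)) ⟨j, hj⟩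
  rw [← subv_transpose_mulVec] at h0
  rw [show A *ᵥ (b - lsqFull A S y) = (A *ᵥ b - y) - (A *ᵥ lsqFull A S y - y) by
    rw [mulVec_sub]; abel, mulVec_sub, Pi.sub_apply]
  simpa [subv] using h0

lemma l2v_lsqFull_sub_le (hrank : IsUnit ((cols A S)ᵀ * cols A S)) {x : Fin m → ℝ} {w : Fin n → ℝ}
    (hx : suppOn x S) (hy : y = A *ᵥ x + w) :
    l2v (lsqFull A S y - x) ≤ spec (((cols A S)ᵀ * cols A S)⁻¹ * (cols A S)ᵀ) * l2v w := by
  have hd : subv (lsqFull A S y - x) S = (((cols A S)ᵀ * cols A S)⁻¹ * (cols A S)ᵀ) *ᵥ w := by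
    rw [show subv (lsqFull A S y - x) S = subv (lsqFull A S y) S - subv x S from rfl,
      subv_lsqFull, lsq, hy, mulVec_eq_cols_mulVec_subv A hx, mulVec_add, mulVec_mulVec,
      mulVec_add, mulVec_mulVec, nonsing_inv_mul _ ((isUnit_iff_isUnit_det _).mp hrank),
      one_mulVec, mulVec_mulVec, add_sub_cancel_left]
  rw [l2v_eq_l2v_subv (suppOn_sub (suppOn_lsqFull A y) hx), hd]
  exact l2v_mulVec_le _ _

end LeastSquares

section RestrictedMinimizer

variable {A : Matrix (Fin n) (Fin m) ℝ} {y : Fin n → ℝ} {γ : ℝ} {T Δ : Finset (Fin m)}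
  {b : Fin m → ℝ}

lemma IsRestrMin.cols_transpose_mulVec_sub_lsqFull_eq_zero (hγ : 0 ≤ γ)
    (hb : IsRestrMin A y γ T (T ∪ Δ) b) (hrank : IsUnit ((cols A (T ∪ Δ))ᵀ * cols A (T ∪ Δ))) :
    (cols A T)ᵀ *ᵥ (A *ᵥ (b - lsqFull A (T ∪ Δ) y)) = 0 := by
  funext j
  change (Aᵀ *ᵥ (A *ᵥ (b - lsqFull A (T ∪ Δ) y))) j.1 = 0
  rw [transpose_mulVec_mulVec_sub_lsqFull_apply hrank b (Finset.mem_union_left _ j.2)]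
  exact hb.corr_eq_zero hγ (Finset.mem_union_left _ j.2) j.2

lemma IsRestrMin.abs_cols_transpose_mulVec_sub_lsqFull_le (hγ : 0 ≤ γ)
    (hb : IsRestrMin A y γ T (T ∪ Δ) b) (hdisj : Disjoint T Δ)
    (hrank : IsUnit ((cols A (T ∪ Δ))ᵀ * cols A (T ∪ Δ))) (j : {j // j ∈ Δ}) :
    |((cols A Δ)ᵀ *ᵥ (A *ᵥ (b - lsqFull A (T ∪ Δ) y))) j| ≤ γ := by
  change |(Aᵀ *ᵥ (A *ᵥ (b - lsqFull A (T ∪ Δ) y))) j.1| ≤ γ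
  rw [transpose_mulVec_mulVec_sub_lsqFull_apply hrank b (Finset.mem_union_right _ j.2)]
  exact hb.abs_corr_le hγ (Finset.mem_union_right _ j.2) (Finset.disjoint_right.mp hdisj j.2)

lemma IsRestrMin.l2v_sub_lsqFull_le (hγ : 0 ≤ γ) (hb : IsRestrMin A y γ T (T ∪ Δ) b)
    (hdisj : Disjoint T Δ) (hrank : IsUnit ((cols A (T ∪ Δ))ᵀ * cols A (T ∪ Δ))) :
    l2v (b - lsqFull A (T ∪ Δ) y) ≤ γ * Real.sqrt (Δ.card) *
      Real.sqrt (spec (crossMat A T Δ) ^ 2 + spec ((schur A T Δ)⁻¹) ^ 2) := by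
  set d := b - lsqFull A (T ∪ Δ) y
  set r := (cols A Δ)ᵀ *ᵥ (A *ᵥ d)
  have hd : suppOn d (T ∪ Δ) := suppOn_sub hb.1 (suppOn_lsqFull A y)
  have hT := hb.cols_transpose_mulVec_sub_lsqFull_eq_zero hγ hrank
  have hr : l2v r ≤ γ * Real.sqrt (Δ.card) := by
    simpa only [Fintype.card_coe] using
      l2v_le_of_abs_le (hb.abs_cols_transpose_mulVec_sub_lsqFull_le hγ hdisj hrank)
  have hdT : l2v (subv d T) ≤ spec (crossMat A T Δ) * l2v r := by
    rw [subv_left_eq_neg_crossMat_mulVec A hdisj hrank hd hT, l2v_neg]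
    exact l2v_mulVec_le _ _
  have hdΔ : l2v (subv d Δ) ≤ spec ((schur A T Δ)⁻¹) * l2v r := by
    rw [subv_right_eq_schur_inv_mulVec A hdisj hrank hd hT]
    exact l2v_mulVec_le _ _
  rw [← sq_le_sq₀ (l2v_nonneg _) (by positivity), l2v_sq_eq_add_of_suppOn_union hdisj hd, mul_pow,
    Real.sq_sqrt (by positivity)]
  calc l2v (subv d T) ^ 2 + l2v (subv d Δ) ^ 2
      ≤ (spec (crossMat A T Δ) * l2v r) ^ 2 + (spec ((schur A T Δ)⁻¹) * l2v r) ^ 2 :=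
        add_le_add (pow_le_pow_left₀ (l2v_nonneg _) hdT 2) (pow_le_pow_left₀ (l2v_nonneg _) hdΔ 2)
    _ = l2v r ^ 2 * (spec (crossMat A T Δ) ^ 2 + spec ((schur A T Δ)⁻¹) ^ 2) := by ring
    _ ≤ _ := mul_le_mul_of_nonneg_right (pow_le_pow_left₀ (l2v_nonneg _) hr 2) (by positivity)

lemma IsRestrMin.abs_corr_lt (hγ : 0 ≤ γ) (hb : IsRestrMin A y γ T (T ∪ Δ) b)
    (hdisj : Disjoint T Δ) (hrank : IsUnit ((cols A (T ∪ Δ))ᵀ * cols A (T ∪ Δ))) (ω : Fin m)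
    (hcond : linfv (Aᵀ *ᵥ (y - cols A (T ∪ Δ) *ᵥ lsq A (T ∪ Δ) y)) < γ * (1 - erc A T Δ ω)) :
    |(Aᵀ *ᵥ (A *ᵥ b - y)) ω| < γ := by
  set c := lsqFull A (T ∪ Δ) y
  set e := Aᵀ *ᵥ (y - cols A (T ∪ Δ) *ᵥ lsq A (T ∪ Δ) y)
  have hsplit : (Aᵀ *ᵥ (A *ᵥ b - y)) ω = (Aᵀ *ᵥ (A *ᵥ (b - c))) ω - e ω := by
    rw [show e = Aᵀ *ᵥ (y - A *ᵥ c) by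
      rw [mulVec_eq_cols_mulVec_subv A (suppOn_lsqFull A y), subv_lsqFull], ← Pi.sub_apply,
      ← mulVec_sub, mulVec_sub A b c, sub_sub_sub_cancel_right]
  have hfit : |(Aᵀ *ᵥ (A *ᵥ (b - c))) ω| ≤ erc A T Δ ω * γ := by
    rw [transpose_mulVec_mulVec_apply_eq_dotProduct A hdisj hrank
      (suppOn_sub hb.1 (suppOn_lsqFull A y))
      (hb.cols_transpose_mulVec_sub_lsqFull_eq_zero hγ hrank)]
    exact abs_dotProduct_le_l1v_mul _ _
      (hb.abs_cols_transpose_mulVec_sub_lsqFull_le hγ hdisj hrank)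
  rw [hsplit]
  linarith [abs_sub ((Aᵀ *ᵥ (A *ᵥ (b - c))) ω) (e ω), abs_le_linfv e ω]

end RestrictedMinimizer

/-- modified-BPDN theorem, ℓ² bound for the global minimizer. -/
theorem stmt11 (n m : ℕ) (A : Matrix (Fin n) (Fin m) ℝ) (T Δ N : Finset (Fin m))
    (hdisj : Disjoint T Δ) (hNNe : N ⊆ T ∪ Δ)
    (hrank : IsUnit ((cols A (T ∪ Δ))ᵀ * cols A (T ∪ Δ)))
    (γ : ℝ) (hγ : 0 < γ) (x : Fin m → ℝ) (hx : suppOn x N)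
    (wn : Fin n → ℝ) (y : Fin n → ℝ) (hy : y = A.mulVec x + wn)
    (hcond : ∀ ω, ω ∉ T ∪ Δ →
      linfv (Aᵀ.mulVec (y - (cols A (T ∪ Δ)).mulVec (lsq A (T ∪ Δ) y))) <
        γ * (1 - erc A T Δ ω))
    (btil : Fin m → ℝ) (hglob : ∀ b, objL A y γ T btil ≤ objL A y γ T b) :
    l2v (btil - x) ≤
      spec (((cols A (T ∪ Δ))ᵀ * cols A (T ∪ Δ))⁻¹ * (cols A (T ∪ Δ))ᵀ) * l2v wn +
      γ * Real.sqrt (Δ.card) *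
        Real.sqrt (spec (crossMat A T Δ) ^ 2 + spec ((schur A T Δ)⁻¹) ^ 2) := by
  obtain ⟨bstar, hbstar⟩ := exists_isRestrMin A y hγ.le T (T ∪ Δ) hrank
  have hsupp : suppOn btil (T ∪ Δ) :=
    hbstar.suppOn_of_forall_objL_le hγ.le Finset.subset_union_left
      (fun ω hω => hbstar.abs_corr_lt hγ.le hdisj hrank ω (hcond ω hω)) hglob
  have hbtil : IsRestrMin A y γ T (T ∪ Δ) btil := ⟨hsupp, fun b _ => hglob b⟩
  set c := lsqFull A (T ∪ Δ) y
  calc l2v (btil - x) = l2v ((btil - c) + (c - x)) := by rw [sub_add_sub_cancel]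
    _ ≤ l2v (btil - c) + l2v (c - x) := l2v_add_le _ _
    _ ≤ _ := by
      linarith [hbtil.l2v_sub_lsqFull_le hγ.le hdisj hrank,
        l2v_lsqFull_sub_le hrank (suppOn_mono hx hNNe) hy]
end
end

section
/- Let T, Δ be disjoint, N_e = T∪Δ, A_{N_e} full column rank, M = I − A_T(A_T'A_T)^{-1}A_T', b̃ the minimizer of L over vectors supported on N_e, c the least-squares solution on N_e, and g the subgradient from the minimizer characterization (g supported on Δ, ‖g_Δ‖_∞ ≤ 1). Then A_{N_e}(c_{N_e} − b̃_{N_e}) = γ M A_Δ (A_Δ' M A_Δ)^{-1} g_Δ. -/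
open Matrix Finset

noncomputable section

variable {n m : ℕ}

/-!
Write `u = (A_Δᵀ M A_Δ)⁻¹ g_Δ` and `v = M A_Δ u`. Since `M A_Δ = A_Δ − A_T (A_Tᵀ A_T)⁻¹ A_Tᵀ A_Δ`,
`v = A_{N_e} w` for some `w`. Since `A_Tᵀ M = 0`, the `T`-block of `A_{N_e}ᵀ v` vanishes, and its
`Δ`-block is `A_Δᵀ M A_Δ u = g_Δ`; as `g` is supported on `Δ`, `A_{N_e}ᵀ v = g_{N_e}`. Hence
`(A_{N_e}ᵀ A_{N_e})⁻¹ g_{N_e} = w`, and the left-hand side is `γ A_{N_e} w = γ v`.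
-/

theorem gram_inv_mulVec_transpose_mulVec_mulVec {ι κ R : Type*} [Fintype ι] [Fintype κ]
    [DecidableEq κ] [CommRing R] (X : Matrix ι κ R) (hX : IsUnit (Xᵀ * X)) (w : κ → R) :
    (Xᵀ * X)⁻¹ *ᵥ (Xᵀ *ᵥ (X *ᵥ w)) = w := by
  rw [mulVec_mulVec, mulVec_mulVec, Matrix.mul_assoc,
    nonsing_inv_mul _ ((isUnit_iff_isUnit_det _).mp hX), one_mulVec]

section Columns

variable (A : Matrix (Fin n) (Fin m) ℝ)

def zeroExtend (S : Finset (Fin m)) (x : {j // j ∈ S} → ℝ) : Fin m → ℝ :=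
  fun j => if h : j ∈ S then x ⟨j, h⟩ else 0

theorem suppOn_zeroExtend (S : Finset (Fin m)) (x : {j // j ∈ S} → ℝ) :
    suppOn (zeroExtend S x) S := fun _ hj => dif_neg hj

theorem suppOn.mono {b : Fin m → ℝ} {S S' : Finset (Fin m)} (hb : suppOn b S) (h : S ⊆ S') :
    suppOn b S' := fun j hj => hb j fun hjS => hj (h hjS)

theorem suppOn.add {b b' : Fin m → ℝ} {S : Finset (Fin m)} (hb : suppOn b S)
    (hb' : suppOn b' S) : suppOn (b + b') S := fun j hj => by
  simp [hb j hj, hb' j hj]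

theorem cols_mulVec_subv_of_suppOn {b : Fin m → ℝ} {S : Finset (Fin m)} (hb : suppOn b S) :
    cols A S *ᵥ subv b S = A *ᵥ b := by
  funext i
  simp only [mulVec, dotProduct, cols, subv, of_apply]
  rw [← sum_subtype S (fun _ => Iff.rfl) (fun j => A i j * b j)]
  exact sum_subset (subset_univ S) fun j _ hj => by simp [hb j hj]

theorem cols_mulVec_eq_mulVec_zeroExtend (S : Finset (Fin m)) (x : {j // j ∈ S} → ℝ) :
    cols A S *ᵥ x = A *ᵥ zeroExtend S x := by
  rw [← cols_mulVec_subv_of_suppOn A (suppOn_zeroExtend S x)]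
  congr 1
  funext j
  simp [subv, zeroExtend]

theorem exists_cols_union_mulVec_eq (T Δ : Finset (Fin m)) (x : {j // j ∈ T} → ℝ)
    (z : {j // j ∈ Δ} → ℝ) :
    ∃ w, cols A (T ∪ Δ) *ᵥ w = cols A T *ᵥ x + cols A Δ *ᵥ z := by
  have hsupp : suppOn (zeroExtend T x + zeroExtend Δ z) (T ∪ Δ) :=
    ((suppOn_zeroExtend T x).mono subset_union_left).add
      ((suppOn_zeroExtend Δ z).mono subset_union_right)
  refine ⟨subv (zeroExtend T x + zeroExtend Δ z) (T ∪ Δ), ?_⟩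
  rw [cols_mulVec_subv_of_suppOn A hsupp, mulVec_add, cols_mulVec_eq_mulVec_zeroExtend,
    cols_mulVec_eq_mulVec_zeroExtend]

theorem transpose_cols_union_mulVec {T Δ : Finset (Fin m)} {v : Fin n → ℝ} {b : Fin m → ℝ}
    (hT : (cols A T)ᵀ *ᵥ v = subv b T) (hΔ : (cols A Δ)ᵀ *ᵥ v = subv b Δ) :
    (cols A (T ∪ Δ))ᵀ *ᵥ v = subv b (T ∪ Δ) := by
  funext ⟨j, hj⟩
  rcases mem_union.mp hj with hjT | hjΔ
  · exact congrFun hT ⟨j, hjT⟩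
  · exact congrFun hΔ ⟨j, hjΔ⟩

end Columns

section Projection

variable (A : Matrix (Fin n) (Fin m) ℝ) (T : Finset (Fin m))

theorem transpose_cols_mul_projM (hT : IsUnit ((cols A T)ᵀ * cols A T)) :
    (cols A T)ᵀ * projM A T = 0 := by
  rw [projM, Matrix.mul_sub, Matrix.mul_one, ← Matrix.mul_assoc, ← Matrix.mul_assoc,
    mul_nonsing_inv _ ((isUnit_iff_isUnit_det _).mp hT), Matrix.one_mul, sub_self]

theorem projM_mul {k : Type*} [Fintype k] (X : Matrix (Fin n) k ℝ) :
    projM A T * X = X - cols A T * (((cols A T)ᵀ * cols A T)⁻¹ * (cols A T)ᵀ * X) := by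
  simp only [projM, Matrix.sub_mul, Matrix.one_mul, Matrix.mul_assoc]

end Projection

theorem stmt16_general (n m : ℕ) (A : Matrix (Fin n) (Fin m) ℝ) (T Δ : Finset (Fin m))
    (hdisj : Disjoint T Δ)
    (hrank : IsUnit ((cols A (T ∪ Δ))ᵀ * cols A (T ∪ Δ)))
    (hT : IsUnit ((cols A T)ᵀ * cols A T)) (hschur : IsUnit (schur A T Δ))
    (γ : ℝ) (y : Fin n → ℝ) (btil g : Fin m → ℝ)
    (hgsupp : suppOn g Δ)
    (hchar : lsq A (T ∪ Δ) y - subv btil (T ∪ Δ) =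
      γ • (((cols A (T ∪ Δ))ᵀ * cols A (T ∪ Δ))⁻¹.mulVec (subv g (T ∪ Δ)))) :
    (cols A (T ∪ Δ)).mulVec (lsq A (T ∪ Δ) y - subv btil (T ∪ Δ)) =
      γ • ((projM A T * cols A Δ * (schur A T Δ)⁻¹).mulVec (subv g Δ)) := by
  set u := (schur A T Δ)⁻¹ *ᵥ subv g Δ
  set v := (projM A T * cols A Δ) *ᵥ u
  obtain ⟨w, hw⟩ : ∃ w, cols A (T ∪ Δ) *ᵥ w = v := by
    obtain ⟨w, hw⟩ := exists_cols_union_mulVec_eq A T Δ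
      (-((((cols A T)ᵀ * cols A T)⁻¹ * (cols A T)ᵀ * cols A Δ) *ᵥ u)) u
    refine ⟨w, ?_⟩
    simp only [v]
    rw [hw, projM_mul, sub_mulVec, mulVec_neg, mulVec_mulVec]
    abel
  have hvT : (cols A T)ᵀ *ᵥ v = subv g T := by
    funext ⟨j, hj⟩
    rw [mulVec_mulVec, ← Matrix.mul_assoc, transpose_cols_mul_projM A T hT, Matrix.zero_mul,
      zero_mulVec]
    exact (hgsupp j (disjoint_left.mp hdisj hj)).symm
  have hvΔ : (cols A Δ)ᵀ *ᵥ v = subv g Δ := by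
    rw [mulVec_mulVec, ← Matrix.mul_assoc, ← schur, mulVec_mulVec,
      mul_nonsing_inv _ ((isUnit_iff_isUnit_det _).mp hschur), one_mulVec]
  rw [hchar, mulVec_smul, ← transpose_cols_union_mulVec A hvT hvΔ, ← hw,
    gram_inv_mulVec_transpose_mulVec_mulVec _ hrank, hw, ← mulVec_mulVec]

/-- A_{N_e}(c_{N_e} − b̃_{N_e}) = γ M A_Δ (A_Δᵀ M A_Δ)⁻¹ g_Δ. -/
theorem stmt16 (n m : ℕ) (A : Matrix (Fin n) (Fin m) ℝ) (T Δ : Finset (Fin m))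
    (hdisj : Disjoint T Δ)
    (hrank : IsUnit ((cols A (T ∪ Δ))ᵀ * cols A (T ∪ Δ)))
    (hT : IsUnit ((cols A T)ᵀ * cols A T)) (hschur : IsUnit (schur A T Δ))
    (γ : ℝ) (hγ : 0 < γ) (y : Fin n → ℝ) (btil g : Fin m → ℝ)
    (hgsupp : suppOn g Δ) (hglinf : linfv g ≤ 1)
    (hchar : lsq A (T ∪ Δ) y - subv btil (T ∪ Δ) =
      γ • (((cols A (T ∪ Δ))ᵀ * cols A (T ∪ Δ))⁻¹.mulVec (subv g (T ∪ Δ)))) :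
    (cols A (T ∪ Δ)).mulVec (lsq A (T ∪ Δ) y - subv btil (T ∪ Δ)) =
      γ • ((projM A T * cols A Δ * (schur A T Δ)⁻¹).mulVec (subv g Δ)) :=
  stmt16_general n m A T Δ hdisj hrank hT hschur γ y btil g hgsupp hchar
end
end
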